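/- arXiv:2406.14557 — 2 statements merged into one kernel-verified Lean document; each statement's English description precedes it below -/
import Mathlib

section
/- Let D = P⁻¹(Q + B/2) be a degree-d SBP operator on a grid x, and let S be a symmetric negative semi-definite matrix with S𝐟 = 0 for all polynomials f of degree ≤ d. Then D± := P⁻¹(Q± + B/2) with Q± = Q ± S/2 are degree-d USBP operators satisfying Q₊ + Q₊ᵀ = S; i.e., D±𝐟 = 𝐟' for polynomials of degree ≤ d, Q₊ + Q₋ᵀ = 0, and Q₊ + Q₊ᵀ = S. -/
open Matrix Polynomial

/-- An SBP operator plus a dissipation matrix annihilating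
polynomials of degree ≤ d yields degree-d USBP operators. -/
theorem sbp_plus_dissipation_gives_usbp {N d : ℕ} (x : Fin N → ℝ)
    (P Q B S : Matrix (Fin N) (Fin N) ℝ)
    (hP : P.PosDef) (hQ : Q + Qᵀ = 0)
    (hexact : ∀ p : Polynomial ℝ, p.degree ≤ d →
      (P⁻¹ * (Q + (1/2 : ℝ) • B)).mulVec (fun i => p.eval (x i)) =
        fun i => (p.derivative).eval (x i))
    (hSsym : Sᵀ = S) (hSneg : (-S).PosSemidef)
    (hann : ∀ p : Polynomial ℝ, p.degree ≤ d →
      S.mulVec (fun i => p.eval (x i)) = 0) :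
    (∀ p : Polynomial ℝ, p.degree ≤ d →
      (P⁻¹ * ((Q + (1/2 : ℝ) • S) + (1/2 : ℝ) • B)).mulVec (fun i => p.eval (x i)) =
        fun i => (p.derivative).eval (x i)) ∧
    (∀ p : Polynomial ℝ, p.degree ≤ d →
      (P⁻¹ * ((Q - (1/2 : ℝ) • S) + (1/2 : ℝ) • B)).mulVec (fun i => p.eval (x i)) =
        fun i => (p.derivative).eval (x i)) ∧
    ((Q + (1/2 : ℝ) • S) + (Q - (1/2 : ℝ) • S)ᵀ = 0) ∧
    ((Q + (1/2 : ℝ) • S) + (Q + (1/2 : ℝ) • S)ᵀ = S) := by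
  have key : ∀ (c : ℝ) (p : Polynomial ℝ), p.degree ≤ d →
      (P⁻¹ * ((Q + c • S) + (1/2 : ℝ) • B)).mulVec (fun i => p.eval (x i)) =
        fun i => (p.derivative).eval (x i) := by
    intro c p hp
    have hm : (Q + c • S) + (1/2 : ℝ) • B = (Q + (1/2 : ℝ) • B) + c • S := by
      abel
    have hz : ((P⁻¹ * (c • S)) *ᵥ fun i => p.eval (x i)) = 0 := by
      rw [← Matrix.mulVec_mulVec, Matrix.smul_mulVec, hann p hp,
        smul_zero, Matrix.mulVec_zero]
    rw [hm, Matrix.mul_add, Matrix.add_mulVec, hexact p hp, hz, add_zero]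
  refine ⟨fun p hp => key _ p hp, fun p hp => ?_, ?_, ?_⟩
  · have := key (-(1/2 : ℝ)) p hp
    rw [show Q + (-(1/2 : ℝ)) • S = Q - (1/2 : ℝ) • S by rw [neg_smul]; abel] at this
    exact this
  · rw [Matrix.transpose_sub, Matrix.transpose_smul, hSsym]
    have : Q + Qᵀ = 0 := hQ
    calc Q + (1/2 : ℝ) • S + (Qᵀ - (1/2 : ℝ) • S)
        = (Q + Qᵀ) := by abel
      _ = 0 := hQ
  · rw [Matrix.transpose_add, Matrix.transpose_smul, hSsym]
    calc Q + (1/2 : ℝ) • S + (Qᵀ + (1/2 : ℝ) • S)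
        = (Q + Qᵀ) + ((1/2 : ℝ) + (1/2 : ℝ)) • S := by
          rw [add_smul]; abel
      _ = S := by rw [hQ]; norm_num
end

section
/- Conversely, if D± = P⁻¹(Q± + B/2) are degree-d USBP operators with Q₊ + Q₊ᵀ = S, then D = (D₊ + D₋)/2 is a degree-d SBP operator and S𝐟 = 0 for all polynomials f of degree ≤ d. -/
open Matrix Polynomial

/-! Averaging the exactness relations of `D₊` and `D₋` gives exactness of `D`, and since
`Q₋ = -Q₊ᵀ` the symmetric parts cancel in `(Q₊ + Q₋)/2`, leaving a skew-symmetric matrix.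
Subtracting them instead gives `D₊ - D₋ = P⁻¹(Q₊ + Q₊ᵀ) = P⁻¹ S`, which kills the nodal values
of every polynomial of degree `≤ d`; multiplying by the invertible `P` shows `S 𝐟 = 0`. -/

namespace Matrix

variable {m n K : Type*}

theorem eq_neg_transpose_of_add_transpose_eq_zero [AddGroup K] {A : Matrix m n K}
    {C : Matrix n m K} (h : A + Cᵀ = 0) : C = -Aᵀ := by
  rw [← transpose_transpose C, ← neg_eq_of_add_eq_zero_right h, transpose_neg]

theorem add_add_transpose_eq_zero [AddCommGroup K] {A C : Matrix n n K} (h : A + Cᵀ = 0) :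
    (A + C) + (A + C)ᵀ = 0 := by
  have hT : C + Aᵀ = 0 := by simpa [add_comm] using congrArg transpose h
  rw [transpose_add, show A + C + (Aᵀ + Cᵀ) = (A + Cᵀ) + (C + Aᵀ) by abel, h, hT, add_zero]

variable [Fintype n] [Field K]

theorem half_smul_add_mulVec [NeZero (2 : K)] {D₁ D₂ : Matrix n n K} {v w : n → K}
    (h₁ : D₁ *ᵥ v = w) (h₂ : D₂ *ᵥ v = w) : ((1 / 2 : K) • (D₁ + D₂)) *ᵥ v = w := by
  funext i
  simp only [smul_mulVec, add_mulVec, h₁, h₂, Pi.smul_apply, Pi.add_apply, smul_eq_mul]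
  linear_combination add_halves (w i)

variable [DecidableEq n]

theorem mulVec_eq_zero_of_sub_eq_inv_mul {P S D₁ D₂ : Matrix n n K} {v : n → K} (hP : IsUnit P)
    (hD : D₁ - D₂ = P⁻¹ * S) (h : D₁ *ᵥ v = D₂ *ᵥ v) : S *ᵥ v = 0 := by
  rw [← mul_nonsing_inv_cancel_left (A := P) S ((isUnit_iff_isUnit_det P).mp hP), ← hD,
    ← mulVec_mulVec, sub_mulVec, h, sub_self, mulVec_zero]

end Matrix

theorem usbp_gives_sbp_and_annihilation_general {N d : ℕ} (x : Fin N → ℝ)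
    (P Qp Qm B S Dp Dm : Matrix (Fin N) (Fin N) ℝ)
    (hP : P.PosDef)
    (hQ : Qp + Qmᵀ = 0)
    (hS : Qp + Qpᵀ = S)
    (hDp : Dp = P⁻¹ * (Qp + (1/2 : ℝ) • B))
    (hDm : Dm = P⁻¹ * (Qm + (1/2 : ℝ) • B))
    (hexactp : ∀ p : Polynomial ℝ, p.degree ≤ d →
      Dp.mulVec (fun i => p.eval (x i)) = fun i => (p.derivative).eval (x i))
    (hexactm : ∀ p : Polynomial ℝ, p.degree ≤ d →
      Dm.mulVec (fun i => p.eval (x i)) = fun i => (p.derivative).eval (x i)) :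
    ((1/2 : ℝ) • (Dp + Dm) = P⁻¹ * ((1/2 : ℝ) • (Qp + Qm) + (1/2 : ℝ) • B)) ∧
    (∀ p : Polynomial ℝ, p.degree ≤ d →
      ((1/2 : ℝ) • (Dp + Dm)).mulVec (fun i => p.eval (x i)) =
        fun i => (p.derivative).eval (x i)) ∧
    ((1/2 : ℝ) • (Qp + Qm) + ((1/2 : ℝ) • (Qp + Qm))ᵀ = 0) ∧
    (∀ p : Polynomial ℝ, p.degree ≤ d →
      S.mulVec (fun i => p.eval (x i)) = 0) := by
  have hDiff : Dp - Dm = P⁻¹ * S := by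
    rw [hDp, hDm, ← mul_sub, ← hS, eq_neg_transpose_of_add_transpose_eq_zero hQ]
    congr 1
    abel
  refine ⟨?_, fun p hp => half_smul_add_mulVec (hexactp p hp) (hexactm p hp), ?_,
    fun p hp => mulVec_eq_zero_of_sub_eq_inv_mul hP.isUnit hDiff
      ((hexactp p hp).trans (hexactm p hp).symm)⟩
  · rw [hDp, hDm, ← mul_add, ← Matrix.mul_smul]
    congr 1
    module
  · rw [transpose_smul, ← smul_add, add_add_transpose_eq_zero hQ, smul_zero]

/-- USBP operators yield an SBP operator D = (Dp+Dm)/2 and the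
dissipation matrix S annihilates nodal values of polynomials of degree ≤ d. -/
theorem usbp_gives_sbp_and_annihilation {N d : ℕ} (x : Fin N → ℝ)
    (hx : Function.Injective x)
    (P Qp Qm B S Dp Dm : Matrix (Fin N) (Fin N) ℝ)
    (hP : P.PosDef)
    (hQ : Qp + Qmᵀ = 0)
    (hS : Qp + Qpᵀ = S) (hSsym : Sᵀ = S) (hSneg : (-S).PosSemidef)
    (hDp : Dp = P⁻¹ * (Qp + (1/2 : ℝ) • B))
    (hDm : Dm = P⁻¹ * (Qm + (1/2 : ℝ) • B))
    (hexactp : ∀ p : Polynomial ℝ, p.degree ≤ d →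
      Dp.mulVec (fun i => p.eval (x i)) = fun i => (p.derivative).eval (x i))
    (hexactm : ∀ p : Polynomial ℝ, p.degree ≤ d →
      Dm.mulVec (fun i => p.eval (x i)) = fun i => (p.derivative).eval (x i)) :
    ((1/2 : ℝ) • (Dp + Dm) = P⁻¹ * ((1/2 : ℝ) • (Qp + Qm) + (1/2 : ℝ) • B)) ∧
    (∀ p : Polynomial ℝ, p.degree ≤ d →
      ((1/2 : ℝ) • (Dp + Dm)).mulVec (fun i => p.eval (x i)) =
        fun i => (p.derivative).eval (x i)) ∧
    ((1/2 : ℝ) • (Qp + Qm) + ((1/2 : ℝ) • (Qp + Qm))ᵀ = 0) ∧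
    (∀ p : Polynomial ℝ, p.degree ≤ d →
      S.mulVec (fun i => p.eval (x i)) = 0) :=
  usbp_gives_sbp_and_annihilation_general x P Qp Qm B S Dp Dm hP hQ hS hDp hDm hexactp hexactm
end
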